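/- arXiv:1609.00115 — 4 statements merged into one kernel-verified Lean document; each statement's English description precedes it below -/
import Mathlib

section
/- For every b > 0 and every v ∈ ℝ, the integral over τ ∈ (0, ∞) of the product of the centered Gaussian density with standard deviation τ evaluated at v and the Rayleigh density with scale b evaluated at τ equals the Laplace density with mean 0 and scale b evaluated at v; that is, ∫₀^∞ (1/(√(2π)·τ))·exp(−v²/(2τ²)) · (τ/b²)·exp(−τ²/(2b²)) dτ = (1/(2b))·exp(−|v|/b). -/
/-!
After completing the square, `v²/(2τ²) + τ²/(2b²) = |v|/b + (τ/(√2 b) - |v|/(√2 τ))²`, the claim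
reduces to the Cauchy–Schlömilch integral `∫₀^∞ exp(-(p x - a/x)²) dx = √π / (2p)`. The inversion
`x ↦ a/(p x)` preserves `(0, ∞)` and flips the sign of `g x = p x - a/x`, so the integral `I`
equals `∫₀^∞ (a/(p x²)) exp(-(g x)²) dx`; averaging the two expressions gives
`2 p I = ∫₀^∞ g'(x) exp(-(g x)²) dx = ∫_ℝ exp(-u²) du = √π`, as `g` is an increasing bijection
of `(0, ∞)` onto `ℝ`.
-/

open Real MeasureTheory Set

theorem integral_Ioi_div_sq_smul_comp_div {E : Type*} [NormedAddCommGroup E] [NormedSpace ℝ E]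
    (f : ℝ → E) {c : ℝ} (hc : 0 < c) :
    ∫ x in Ioi 0, (c / x ^ 2) • f (c / x) = ∫ x in Ioi 0, f x := by
  have himage : (fun x => c / x) '' Ioi 0 = Ioi 0 := by
    refine Subset.antisymm (image_subset_iff.mpr fun x hx => div_pos hc hx) fun y hy => ?_
    exact ⟨c / y, div_pos hc hy, div_div_cancel₀ hc.ne'⟩
  have hderiv : ∀ x ∈ Ioi (0 : ℝ), HasDerivWithinAt (fun x => c / x) (-c / x ^ 2) (Ioi 0) x :=
    fun x hx =>
      (((hasDerivAt_const x c).div (hasDerivAt_id' x) (ne_of_gt hx)).congr_deriv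
        (by ring)).hasDerivWithinAt
  have hinj : InjOn (fun x => c / x) (Ioi 0) :=
    fun x _ y _ h => by simpa [div_eq_mul_inv, hc.ne'] using h
  have hcov := integral_image_eq_integral_abs_deriv_smul measurableSet_Ioi hderiv hinj f
  rw [himage] at hcov
  rw [hcov]
  refine setIntegral_congr_fun measurableSet_Ioi fun x _ => ?_
  simp [abs_div, abs_of_pos hc]

theorem hasDerivAt_mul_sub_div (p a : ℝ) {x : ℝ} (hx : x ≠ 0) :
    HasDerivAt (fun x => p * x - a / x) (p + a / x ^ 2) x :=
  (((hasDerivAt_id' x).const_mul p).sub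
    ((hasDerivAt_const x a).div (hasDerivAt_id' x) hx)).congr_deriv (by ring)

section MulSubDiv

variable {p a : ℝ}

theorem strictMonoOn_mul_sub_div (hp : 0 < p) (ha : 0 ≤ a) :
    StrictMonoOn (fun x => p * x - a / x) (Ioi 0) := fun x hx _ _ hxy =>
  by linarith [mul_lt_mul_of_pos_left hxy hp, div_le_div_of_nonneg_left ha hx hxy.le]

theorem image_mul_sub_div_Ioi (hp : 0 < p) (ha : 0 < a) :
    (fun x => p * x - a / x) '' Ioi 0 = univ := by
  refine eq_univ_of_forall fun u => ?_
  set s := √(u ^ 2 + 4 * p * a)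
  have hs : s ^ 2 = u ^ 2 + 4 * p * a := sq_sqrt (by positivity)
  have hus : -u < s := by
    nlinarith [sqrt_nonneg (u ^ 2 + 4 * p * a), mul_pos hp ha]
  set x := (u + s) / (2 * p)
  have hx : 0 < x := div_pos (by linarith) (by positivity)
  have hroot : p * x ^ 2 - u * x - a = 0 := by
    simp only [x]; field_simp; linear_combination hs
  refine ⟨x, hx, ?_⟩
  field_simp
  linear_combination hroot

theorem integral_Ioi_add_div_sq_smul_comp_mul_sub_div {E : Type*} [NormedAddCommGroup E]
    [NormedSpace ℝ E] (f : ℝ → E) (hp : 0 < p) (ha : 0 < a) :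
    ∫ x in Ioi 0, (p + a / x ^ 2) • f (p * x - a / x) = ∫ u, f u := by
  have hderiv : ∀ x ∈ Ioi (0 : ℝ),
      HasDerivWithinAt (fun x => p * x - a / x) (p + a / x ^ 2) (Ioi 0) x :=
    fun x hx => (hasDerivAt_mul_sub_div p a (ne_of_gt hx)).hasDerivWithinAt
  have hcov := integral_image_eq_integral_abs_deriv_smul measurableSet_Ioi hderiv
    (strictMonoOn_mul_sub_div hp ha.le).injOn f
  rw [image_mul_sub_div_Ioi hp ha, Measure.restrict_univ] at hcov
  rw [hcov]
  refine setIntegral_congr_fun measurableSet_Ioi fun x (hx : 0 < x) => ?_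
  rw [abs_of_pos (by positivity)]

theorem integrableOn_Ioi_add_div_sq_smul_comp_mul_sub_div_iff {E : Type*} [NormedAddCommGroup E]
    [NormedSpace ℝ E] (f : ℝ → E) (hp : 0 < p) (ha : 0 < a) :
    IntegrableOn (fun x => (p + a / x ^ 2) • f (p * x - a / x)) (Ioi 0) ↔ Integrable f := by
  have hcov := integrableOn_image_iff_integrableOn_abs_deriv_smul measurableSet_Ioi
    (fun x hx => (hasDerivAt_mul_sub_div p a (ne_of_gt hx)).hasDerivWithinAt)
    (strictMonoOn_mul_sub_div hp ha.le).injOn f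
  rw [image_mul_sub_div_Ioi hp ha, integrableOn_univ] at hcov
  rw [hcov]
  refine integrableOn_congr_fun (fun x (hx : 0 < x) => ?_) measurableSet_Ioi
  rw [abs_of_pos (by positivity)]

theorem integral_exp_neg_sq_mul_sub_div_Ioi (hp : 0 < p) (ha : 0 ≤ a) :
    ∫ x in Ioi 0, exp (-(p * x - a / x) ^ 2) = √π / (2 * p) := by
  obtain rfl | ha := ha.eq_or_lt
  · have h := integral_gaussian_Ioi (p ^ 2)
    rw [sqrt_div pi_pos.le, sqrt_sq hp.le, div_div, mul_comm p] at h
    simpa [mul_pow] using h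
  have hderiv_int : ∫ x in Ioi 0, (p + a / x ^ 2) * exp (-(p * x - a / x) ^ 2) = √π := by
    have hgauss : ∫ u, exp (-u ^ 2) = √π := by simpa using integral_gaussian 1
    rw [← hgauss]
    exact integral_Ioi_add_div_sq_smul_comp_mul_sub_div (fun u => exp (-u ^ 2)) hp ha
  have hderiv_integrable :
      IntegrableOn (fun x => (p + a / x ^ 2) * exp (-(p * x - a / x) ^ 2)) (Ioi 0) :=
    (integrableOn_Ioi_add_div_sq_smul_comp_mul_sub_div_iff (fun u => exp (-u ^ 2)) hp ha).mpr
      (by simpa using integrable_exp_neg_mul_sq one_pos)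
  set E := fun x => exp (-(p * x - a / x) ^ 2)
  have hc : 0 < a / p := div_pos ha hp
  have hinv : ∫ x in Ioi 0, E x = ∫ x in Ioi 0, (a / p / x ^ 2) * E x := by
    rw [← integral_Ioi_div_sq_smul_comp_div E hc]
    refine setIntegral_congr_fun measurableSet_Ioi fun x (hx : 0 < x) => ?_
    have hflip : p * (a / p / x) - a / (a / p / x) = -(p * x - a / x) := by
      field_simp; ring
    simp only [E, smul_eq_mul, hflip, neg_sq]
  have hE : IntegrableOn E (Ioi 0) := by
    refine (hderiv_integrable.const_mul p⁻¹).mono' (by fun_prop)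
      (ae_restrict_of_forall_mem measurableSet_Ioi fun x (hx : 0 < x) => ?_)
    rw [norm_of_nonneg (exp_pos _).le, ← mul_assoc, mul_add, inv_mul_cancel₀ hp.ne']
    exact le_mul_of_one_le_left (exp_pos _).le (le_add_of_nonneg_right (by positivity))
  have hsplit : ∀ x, (a / p / x ^ 2) * E x = p⁻¹ * ((p + a / x ^ 2) * E x) - E x := by
    intro x; field_simp; ring
  rw [funext hsplit, integral_sub (hderiv_integrable.const_mul p⁻¹) hE, integral_const_mul,
    hderiv_int] at hinv
  rw [eq_div_iff (by positivity)]
  linear_combination p * hinv + √π * mul_inv_cancel₀ hp.ne'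

end MulSubDiv

/-- The Gaussian scale mixture with Rayleigh mixing weights: for every `b > 0` and `v : ℝ`,
integrating the centered Gaussian density with standard deviation `τ` at `v` against the
Rayleigh density with scale `b` over `τ ∈ (0, ∞)` yields the Laplace density with mean `0`
and scale `b` at `v`. -/
theorem rayleigh_gaussian_mixture_eq_laplace_density (b v : ℝ) (hb : 0 < b) :
    ∫ τ in Set.Ioi (0 : ℝ),
      (1 / (Real.sqrt (2 * π) * τ)) * Real.exp (-v ^ 2 / (2 * τ ^ 2)) *
        ((τ / b ^ 2) * Real.exp (-τ ^ 2 / (2 * b ^ 2)))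
    = (1 / (2 * b)) * Real.exp (-|v| / b) := by
  have hintegrand : ∀ τ ∈ Ioi (0 : ℝ),
      (1 / (√(2 * π) * τ)) * exp (-v ^ 2 / (2 * τ ^ 2)) * ((τ / b ^ 2) * exp (-τ ^ 2 / (2 * b ^ 2)))
        = exp (-|v| / b) / (√(2 * π) * b ^ 2) *
          exp (-(1 / (√2 * b) * τ - |v| / √2 / τ) ^ 2) := by
    intro τ (hτ : 0 < τ)
    have hexponent : -v ^ 2 / (2 * τ ^ 2) + -τ ^ 2 / (2 * b ^ 2)
        = -|v| / b + -(1 / (√2 * b) * τ - |v| / √2 / τ) ^ 2 := by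
      rw [← sq_abs v]
      field_simp
      rw [sq_sqrt zero_le_two]
      ring
    rw [mul_mul_mul_comm, ← exp_add, hexponent, exp_add]
    field_simp
  rw [setIntegral_congr_fun measurableSet_Ioi hintegrand, integral_const_mul,
    integral_exp_neg_sq_mul_sub_div_Ioi (by positivity) (by positivity), sqrt_mul zero_le_two]
  field_simp
end

section
/- For all real numbers p > 0 and q > 0, ∫₀^∞ exp(−p²t² − q²/t²) dt = (√π/(2p))·exp(−2pq). -/
/-!
The substitution `x = u - a / u` (Cauchy–Schlömilch) maps `(0, ∞)` monotonically onto `ℝ` with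
`dx = (1 + a / u²) du`, while `u ↦ a / u` turns `(a / u²) du` into `du` and `u - a / u` into its
negative. Hence for even integrable `f`, `∫₀^∞ f (u - a / u) du = ½ ∫ f`. Since
`u² + a² / u² = (u - a / u)² + 2a`, the Gaussian case gives
`∫₀^∞ exp (-u² - a² / u²) du = (√π / 2) exp (-2a)`, and `t = u / p` with `a = pq` finishes.
-/

open Real MeasureTheory Set

section CauchySchlomilch

variable {E : Type*} [NormedAddCommGroup E] [NormedSpace ℝ E] {a : ℝ}

lemma hasDerivAt_sub_div (a : ℝ) {u : ℝ} (hu : u ≠ 0) :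
    HasDerivAt (fun u : ℝ => u - a / u) (1 + a / u ^ 2) u := by
  have h := (hasDerivAt_id u).sub ((hasDerivAt_inv hu).const_mul a)
  simp only [div_eq_mul_inv]
  exact h.congr_deriv (by simp)

lemma hasDerivAt_const_div (a : ℝ) {u : ℝ} (hu : u ≠ 0) :
    HasDerivAt (fun u : ℝ => a / u) (-(a / u ^ 2)) u := by
  simpa only [div_eq_mul_inv, mul_neg] using (hasDerivAt_inv hu).const_mul a

lemma strictMonoOn_sub_div (ha : 0 ≤ a) : StrictMonoOn (fun u : ℝ => u - a / u) (Ioi 0) := by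
  intro u hu v _ huv
  have : a / v ≤ a / u := div_le_div_of_nonneg_left ha hu huv.le
  dsimp only
  linarith

lemma image_sub_div_Ioi (ha : 0 < a) : (fun u : ℝ => u - a / u) '' Ioi 0 = univ := by
  refine eq_univ_of_forall fun x => ?_
  -- the positive root of `u ^ 2 - x * u - a = 0`
  set s := √(x ^ 2 + 4 * a)
  have hs : s ^ 2 = x ^ 2 + 4 * a := sq_sqrt (by positivity)
  have habs : |x| < s := by
    rw [← sqrt_sq_eq_abs]
    exact sqrt_lt_sqrt (sq_nonneg x) (by linarith)
  have hxs : 0 < x + s := by linarith [neg_abs_le x]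
  refine ⟨(x + s) / 2, half_pos hxs, ?_⟩
  field_simp
  linear_combination hs

lemma image_const_div_Ioi (ha : 0 < a) : (fun u : ℝ => a / u) '' Ioi 0 = Ioi 0 := by
  refine Subset.antisymm (image_subset_iff.2 fun u hu => div_pos ha hu) fun v hv => ?_
  exact ⟨a / v, div_pos ha hv, div_div_cancel₀ ha.ne'⟩

lemma integral_Ioi_comp_const_div (ha : 0 < a) (g : ℝ → E) :
    ∫ u in Ioi 0, (a / u ^ 2) • g (a / u) = ∫ v in Ioi 0, g v := by
  have hinj : InjOn (fun u : ℝ => a / u) (Ioi 0) := fun u _ v _ h => by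
    simpa only [div_div_cancel₀ ha.ne'] using congrArg (a / ·) h
  conv_rhs =>
    rw [← image_const_div_Ioi ha, integral_image_eq_integral_abs_deriv_smul measurableSet_Ioi
      (fun u hu => (hasDerivAt_const_div a (ne_of_gt hu)).hasDerivWithinAt) hinj]
  refine setIntegral_congr_fun measurableSet_Ioi fun u hu => ?_
  have : 0 ≤ a / u ^ 2 := by have := mem_Ioi.1 hu; positivity
  simp [abs_of_nonneg this]

lemma integrableOn_Ioi_deriv_smul_comp_sub_div (ha : 0 < a) {f : ℝ → E} (hf : Integrable f) :
    IntegrableOn (fun u => (1 + a / u ^ 2) • f (u - a / u)) (Ioi 0) := by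
  have h := (integrableOn_image_iff_integrableOn_abs_deriv_smul measurableSet_Ioi
    (fun u hu => (hasDerivAt_sub_div a (ne_of_gt hu)).hasDerivWithinAt)
    (strictMonoOn_sub_div ha.le).injOn f).1 (by rwa [image_sub_div_Ioi ha, integrableOn_univ])
  refine h.congr_fun (fun u _ => ?_) measurableSet_Ioi
  dsimp only
  rw [abs_of_nonneg (by positivity)]

lemma integral_Ioi_deriv_smul_comp_sub_div (ha : 0 < a) (f : ℝ → E) :
    ∫ u in Ioi 0, (1 + a / u ^ 2) • f (u - a / u) = ∫ x, f x := by
  have h := integral_image_eq_integral_abs_deriv_smul measurableSet_Ioi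
    (fun u hu => (hasDerivAt_sub_div a (ne_of_gt hu)).hasDerivWithinAt)
    (strictMonoOn_sub_div ha.le).injOn f
  rw [image_sub_div_Ioi ha, Measure.restrict_univ] at h
  rw [h]
  refine setIntegral_congr_fun measurableSet_Ioi fun u _ => ?_
  rw [abs_of_nonneg (by positivity)]

lemma integrableOn_Ioi_comp_sub_div (ha : 0 < a) {f : ℝ → E} (hf : Integrable f) :
    IntegrableOn (fun u => f (u - a / u)) (Ioi 0) := by
  have hbound : ∀ u : ℝ, ‖(1 + a / u ^ 2)⁻¹‖ ≤ 1 := fun u => by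
    rw [norm_inv, Real.norm_of_nonneg (by positivity)]
    exact inv_le_one_of_one_le₀ (le_add_of_nonneg_right (by positivity))
  have h : IntegrableOn
      (fun u => (1 + a / u ^ 2)⁻¹ • (1 + a / u ^ 2) • f (u - a / u)) (Ioi 0) :=
    (integrableOn_Ioi_deriv_smul_comp_sub_div ha hf).bdd_smul 1
      (by fun_prop : Measurable fun u : ℝ => (1 + a / u ^ 2)⁻¹).aestronglyMeasurable
      (ae_of_all _ hbound)
  refine h.congr_fun (fun u _ => ?_) measurableSet_Ioi
  have : 1 + a / u ^ 2 ≠ 0 := by positivity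
  simp [smul_smul, inv_mul_cancel₀ this]

theorem integral_Ioi_comp_sub_div_of_even (ha : 0 < a) {f : ℝ → E} (hf : Integrable f)
    (heven : ∀ x, f (-x) = f x) :
    ∫ u in Ioi 0, f (u - a / u) = (2 : ℝ)⁻¹ • ∫ x, f x := by
  have hint := integrableOn_Ioi_comp_sub_div ha hf
  have hint' : IntegrableOn (fun u => (a / u ^ 2) • f (u - a / u)) (Ioi 0) :=
    ((integrableOn_Ioi_deriv_smul_comp_sub_div ha hf).sub hint).congr_fun
      (fun u _ => by simp [add_smul]) measurableSet_Ioi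
  have hsymm : ∫ u in Ioi 0, (a / u ^ 2) • f (u - a / u) = ∫ u in Ioi 0, f (u - a / u) := by
    refine Eq.trans ?_ (integral_Ioi_comp_const_div ha fun v => f (v - a / v))
    refine setIntegral_congr_fun measurableSet_Ioi fun u _ => ?_
    rw [div_div_cancel₀ ha.ne', ← heven, neg_sub]
  have htwo : ∫ x, f x = (2 : ℝ) • ∫ u in Ioi 0, f (u - a / u) := by
    rw [← integral_Ioi_deriv_smul_comp_sub_div ha f, two_smul]
    nth_rewrite 2 [← hsymm]
    rw [← integral_add hint hint']
    simp only [add_smul, one_smul]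
  rw [htwo, smul_smul, inv_mul_cancel₀ two_ne_zero, one_smul]

end CauchySchlomilch

lemma integral_Ioi_exp_neg_sq_sub_div {a : ℝ} (ha : 0 < a) :
    ∫ u in Ioi 0, exp (-(u - a / u) ^ 2) = √π / 2 := by
  have h := integral_Ioi_comp_sub_div_of_even ha (f := fun x => exp (-x ^ 2))
    (by simpa using integrable_exp_neg_mul_sq one_pos) (fun x => by simp)
  have hgauss : ∫ x, exp (-x ^ 2) = √π := by simpa using integral_gaussian 1
  rw [h, hgauss, smul_eq_mul, inv_mul_eq_div]

lemma integral_Ioi_exp_neg_sq_sub_sq_div_sq {a : ℝ} (ha : 0 < a) :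
    ∫ u in Ioi 0, exp (-u ^ 2 - a ^ 2 / u ^ 2) = exp (-(2 * a)) * (√π / 2) := by
  rw [← integral_Ioi_exp_neg_sq_sub_div ha, ← integral_const_mul]
  refine setIntegral_congr_fun measurableSet_Ioi fun u hu => ?_
  have : u ≠ 0 := ne_of_gt hu
  rw [← exp_add]
  congr 1
  field_simp
  ring

/-- The classical integral identity (Lebedev (5.10.10)): for all `p > 0` and `q > 0`,
`∫₀^∞ exp (−p²t² − q²/t²) dt = (√π / (2p)) · exp (−2pq)`. -/
theorem integral_exp_neg_sq_add_inv_sq (p q : ℝ) (hp : 0 < p) (hq : 0 < q) :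
    ∫ t in Set.Ioi (0 : ℝ), Real.exp (-(p ^ 2 * t ^ 2) - q ^ 2 / t ^ 2)
      = (Real.sqrt π / (2 * p)) * Real.exp (-(2 * p * q)) := by
  calc ∫ t in Ioi 0, exp (-(p ^ 2 * t ^ 2) - q ^ 2 / t ^ 2)
      = ∫ t in Ioi 0, exp (-(p * t) ^ 2 - (p * q) ^ 2 / (p * t) ^ 2) := by
        refine setIntegral_congr_fun measurableSet_Ioi fun t _ => ?_
        rw [mul_pow, mul_pow, mul_div_mul_left _ _ (pow_ne_zero 2 hp.ne')]
    _ = p⁻¹ * ∫ u in Ioi 0, exp (-u ^ 2 - (p * q) ^ 2 / u ^ 2) := by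
        rw [integral_comp_mul_left_Ioi (fun u => exp (-u ^ 2 - (p * q) ^ 2 / u ^ 2)) 0 hp,
          mul_zero, smul_eq_mul]
    _ = _ := by
        rw [integral_Ioi_exp_neg_sq_sub_sq_div_sq (mul_pos hp hq)]
        field_simp
end

section
/- Let Ξ ∈ ℝ^{n×n} be symmetric positive definite, let C ∈ ℝ^{1×n} be a nonzero row vector, let μ ∈ ℝⁿ, y ∈ ℝ, and c > 0. Define f : ℝⁿ → ℝ by f(x) = (1/2)·(x − μ)ᵀ·Ξ⁻¹·(x − μ) + c·|C·x − y|. If y < C·μ − c·(C·Ξ·Cᵀ), then x* = μ − c·Ξ·Cᵀ is the unique global minimizer of f. -/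
open Matrix

/-!
Write `s = μ - c • Ξ C`. Since `Ξ⁻¹ (s - μ) = -c C`, the point `s` is stationary for the smooth
part of `f` with the subgradient `c C` of the absolute value term, and that subgradient is the right
one because `C s - y > 0` in the lower regime. Expanding the quadratic around `s` then gives
`f x ≥ f s + ½ (x - s)ᵀ Ξ⁻¹ (x - s)`, and the last term is positive for `x ≠ s`.
-/

variable {ι : Type*} [Fintype ι]

noncomputable def mapObjective (P : Matrix ι ι ℝ) (μ C : ι → ℝ) (y c : ℝ) (x : ι → ℝ) : ℝ :=
  1 / 2 * ((x - μ) ⬝ᵥ (P *ᵥ (x - μ))) + c * |C ⬝ᵥ x - y|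

theorem Matrix.IsSymm.add_dotProduct_mulVec_add {P : Matrix ι ι ℝ} (hP : P.IsSymm)
    (u d : ι → ℝ) :
    (u + d) ⬝ᵥ (P *ᵥ (u + d)) = u ⬝ᵥ (P *ᵥ u) + 2 * (d ⬝ᵥ (P *ᵥ u)) + d ⬝ᵥ (P *ᵥ d) := by
  have hswap : u ⬝ᵥ (P *ᵥ d) = d ⬝ᵥ (P *ᵥ u) := by
    rw [dotProduct_mulVec, ← mulVec_transpose, hP.eq, dotProduct_comm]
  rw [mulVec_add, add_dotProduct, dotProduct_add, dotProduct_add, hswap]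
  ring

theorem mapObjective_ge_of_stationary {P : Matrix ι ι ℝ} (hP : P.IsSymm) {μ C s : ι → ℝ}
    {y c : ℝ} (hc : 0 ≤ c) (hstat : P *ᵥ (s - μ) = -(c • C)) (hs : y ≤ C ⬝ᵥ s) (x : ι → ℝ) :
    mapObjective P μ C y c s + 1 / 2 * ((x - s) ⬝ᵥ (P *ᵥ (x - s)))
      ≤ mapObjective P μ C y c x := by
  have hquad : (x - μ) ⬝ᵥ (P *ᵥ (x - μ))
      = (s - μ) ⬝ᵥ (P *ᵥ (s - μ)) - 2 * c * (C ⬝ᵥ (x - s)) + (x - s) ⬝ᵥ (P *ᵥ (x - s)) := by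
    rw [show x - μ = (s - μ) + (x - s) by abel, hP.add_dotProduct_mulVec_add, hstat]
    simp only [dotProduct_neg, dotProduct_smul, smul_eq_mul, dotProduct_comm (x - s) C]
    ring
  have habs : C ⬝ᵥ s - y + C ⬝ᵥ (x - s) ≤ |C ⬝ᵥ x - y| := by
    rw [dotProduct_sub]
    linarith [le_abs_self (C ⬝ᵥ x - y)]
  unfold mapObjective
  rw [hquad, abs_of_nonneg (sub_nonneg.mpr hs)]
  linarith [mul_le_mul_of_nonneg_left habs hc]

theorem map_estimate_lower_regime_general
    {n : ℕ} (Ξ : Matrix (Fin n) (Fin n) ℝ) (hΞ : Ξ.PosDef)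
    (C : Fin n → ℝ) (μ : Fin n → ℝ) (y c : ℝ) (hc : 0 < c)
    (f : (Fin n → ℝ) → ℝ)
    (hf : ∀ x, f x = (1 / 2) * ((x - μ) ⬝ᵥ (Ξ⁻¹ *ᵥ (x - μ))) + c * |C ⬝ᵥ x - y|)
    (hy : y < C ⬝ᵥ μ - c * (C ⬝ᵥ (Ξ *ᵥ C))) :
    ∀ x : Fin n → ℝ, x ≠ μ - c • (Ξ *ᵥ C) → f (μ - c • (Ξ *ᵥ C)) < f x := by
  intro x hx
  set s := μ - c • (Ξ *ᵥ C)
  have hf' : f = mapObjective Ξ⁻¹ μ C y c := funext hf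
  have hP : (Ξ⁻¹).IsSymm := isHermitian_iff_isSymm.mp hΞ.inv.isHermitian
  have hstat : Ξ⁻¹ *ᵥ (s - μ) = -(c • C) := by
    rw [sub_sub_cancel_left, mulVec_neg, mulVec_smul, mulVec_mulVec,
      nonsing_inv_mul Ξ (isUnit_iff_ne_zero.mpr hΞ.det_pos.ne'), one_mulVec]
  have hs : y ≤ C ⬝ᵥ s := by
    simp only [s, dotProduct_sub, dotProduct_smul, smul_eq_mul]
    linarith
  have hpos : 0 < (x - s) ⬝ᵥ (Ξ⁻¹ *ᵥ (x - s)) := by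
    simpa using hΞ.inv.dotProduct_mulVec_pos (sub_ne_zero.mpr hx)
  rw [hf']
  linarith [mapObjective_ge_of_stationary hP hc.le hstat hs x]

/-- Windowed MAP estimate, lower regime: for `f x = ½(x−μ)ᵀΞ⁻¹(x−μ) + c·|Cx − y|` with `Ξ`
symmetric positive definite, `C ≠ 0` a row vector and `c > 0`, if `y < Cμ − c·(CΞCᵀ)` then
`x* = μ − c·ΞCᵀ` is the unique global minimizer of `f`. -/
theorem map_estimate_lower_regime
    {n : ℕ} (Ξ : Matrix (Fin n) (Fin n) ℝ) (hΞ : Ξ.PosDef)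
    (C : Fin n → ℝ) (hC : C ≠ 0) (μ : Fin n → ℝ) (y c : ℝ) (hc : 0 < c)
    (f : (Fin n → ℝ) → ℝ)
    (hf : ∀ x, f x = (1 / 2) * ((x - μ) ⬝ᵥ (Ξ⁻¹ *ᵥ (x - μ))) + c * |C ⬝ᵥ x - y|)
    (hy : y < C ⬝ᵥ μ - c * (C ⬝ᵥ (Ξ *ᵥ C))) :
    ∀ x : Fin n → ℝ, x ≠ μ - c • (Ξ *ᵥ C) → f (μ - c • (Ξ *ᵥ C)) < f x :=
  map_estimate_lower_regime_general Ξ hΞ C μ y c hc f hf hy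
end

section
/- Let Ξ ∈ ℝ^{n×n} be symmetric positive definite, let C ∈ ℝ^{1×n} be a nonzero row vector, let μ ∈ ℝⁿ, y ∈ ℝ, and c > 0. Define f : ℝⁿ → ℝ by f(x) = (1/2)·(x − μ)ᵀ·Ξ⁻¹·(x − μ) + c·|C·x − y|. If y > C·μ + c·(C·Ξ·Cᵀ), then x* = μ + c·Ξ·Cᵀ is the unique global minimizer of f. -/
open Matrix

/-! At `x* = μ + c·ΞCᵀ` the gradient `Ξ⁻¹(x* − μ) = c·C` of the quadratic term is cancelled by the
slope `−c·C` of `c·|C·x − y|`, which is linear near `x*` because `C·x* < y`. Expanding the quadratic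
around `x*` and bounding `|C·x − y| ≥ y − C·x` gives `f x ≥ f x* + ½ (x − x*)ᵀ Ξ⁻¹ (x − x*)`, and
the last term is positive for `x ≠ x*`. -/

namespace Matrix

variable {m : Type*} [Fintype m]

theorem IsSymm.dotProduct_mulVec_comm {R : Type*} [CommSemiring R] {Q : Matrix m m R}
    (hQ : Q.IsSymm) (u v : m → R) :
    u ⬝ᵥ (Q *ᵥ v) = v ⬝ᵥ (Q *ᵥ u) := by
  rw [dotProduct_mulVec, ← mulVec_transpose, hQ.eq, dotProduct_comm]

theorem IsSymm.dotProduct_mulVec_add_self {R : Type*} [CommSemiring R] {Q : Matrix m m R}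
    (hQ : Q.IsSymm) (u v : m → R) :
    (u + v) ⬝ᵥ (Q *ᵥ (u + v)) =
      u ⬝ᵥ (Q *ᵥ u) + 2 * (u ⬝ᵥ (Q *ᵥ v)) + v ⬝ᵥ (Q *ᵥ v) := by
  rw [mulVec_add, dotProduct_add, add_dotProduct, add_dotProduct, hQ.dotProduct_mulVec_comm v u]
  ring

theorem PosDef.quadratic_add_abs_lt_of_stationary {Q : Matrix m m ℝ} (hQ : Q.PosDef)
    {C μ x₀ : m → ℝ} {y c : ℝ} (hc : 0 ≤ c) (hgrad : Q *ᵥ (x₀ - μ) = c • C)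
    (hlt : C ⬝ᵥ x₀ < y) {x : m → ℝ} (hx : x ≠ x₀) :
    1 / 2 * ((x₀ - μ) ⬝ᵥ (Q *ᵥ (x₀ - μ))) + c * |C ⬝ᵥ x₀ - y| <
      1 / 2 * ((x - μ) ⬝ᵥ (Q *ᵥ (x - μ))) + c * |C ⬝ᵥ x - y| := by
  set d := x - x₀
  have hquad : (x - μ) ⬝ᵥ (Q *ᵥ (x - μ)) =
      d ⬝ᵥ (Q *ᵥ d) + 2 * (c * (C ⬝ᵥ d)) + (x₀ - μ) ⬝ᵥ (Q *ᵥ (x₀ - μ)) := by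
    have hsymm : Q.IsSymm := hQ.isHermitian
    rw [← sub_add_sub_cancel x x₀ μ, hsymm.dotProduct_mulVec_add_self,
      hgrad, dotProduct_smul, smul_eq_mul, dotProduct_comm d C]
  have habs : y - C ⬝ᵥ x₀ - C ⬝ᵥ d ≤ |C ⬝ᵥ x - y| := by
    calc y - C ⬝ᵥ x₀ - C ⬝ᵥ d = y - C ⬝ᵥ x := by rw [dotProduct_sub]; ring
      _ ≤ |C ⬝ᵥ x - y| := abs_sub_comm (C ⬝ᵥ x) y ▸ le_abs_self _
  have hpos : 0 < d ⬝ᵥ (Q *ᵥ d) := by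
    simpa only [star_trivial] using hQ.dotProduct_mulVec_pos (sub_ne_zero.mpr hx)
  rw [hquad, abs_of_neg (sub_neg.mpr hlt)]
  nlinarith [mul_le_mul_of_nonneg_left habs hc]

end Matrix

theorem map_estimate_upper_regime_general
    {n : ℕ} (Ξ : Matrix (Fin n) (Fin n) ℝ) (hΞ : Ξ.PosDef)
    (C : Fin n → ℝ) (μ : Fin n → ℝ) (y c : ℝ) (hc : 0 < c)
    (f : (Fin n → ℝ) → ℝ)
    (hf : ∀ x, f x = (1 / 2) * ((x - μ) ⬝ᵥ (Ξ⁻¹ *ᵥ (x - μ))) + c * |C ⬝ᵥ x - y|)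
    (hy : C ⬝ᵥ μ + c * (C ⬝ᵥ (Ξ *ᵥ C)) < y) :
    ∀ x : Fin n → ℝ, x ≠ μ + c • (Ξ *ᵥ C) → f (μ + c • (Ξ *ᵥ C)) < f x := by
  intro x hx
  have hgrad : Ξ⁻¹ *ᵥ (μ + c • (Ξ *ᵥ C) - μ) = c • C := by
    rw [add_sub_cancel_left, mulVec_smul, mulVec_mulVec,
      nonsing_inv_mul Ξ (isUnit_iff_ne_zero.mpr hΞ.det_pos.ne'), one_mulVec]
  have hlt : C ⬝ᵥ (μ + c • (Ξ *ᵥ C)) < y := by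
    rwa [dotProduct_add, dotProduct_smul, smul_eq_mul]
  rw [hf, hf]
  exact hΞ.inv.quadratic_add_abs_lt_of_stationary hc.le hgrad hlt hx

/-- Windowed MAP estimate, upper regime: for `f x = ½(x−μ)ᵀΞ⁻¹(x−μ) + c·|Cx − y|` with `Ξ`
symmetric positive definite, `C ≠ 0` a row vector and `c > 0`, if `y > Cμ + c·(CΞCᵀ)` then
`x* = μ + c·ΞCᵀ` is the unique global minimizer of `f`. -/
theorem map_estimate_upper_regime
    {n : ℕ} (Ξ : Matrix (Fin n) (Fin n) ℝ) (hΞ : Ξ.PosDef)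
    (C : Fin n → ℝ) (hC : C ≠ 0) (μ : Fin n → ℝ) (y c : ℝ) (hc : 0 < c)
    (f : (Fin n → ℝ) → ℝ)
    (hf : ∀ x, f x = (1 / 2) * ((x - μ) ⬝ᵥ (Ξ⁻¹ *ᵥ (x - μ))) + c * |C ⬝ᵥ x - y|)
    (hy : C ⬝ᵥ μ + c * (C ⬝ᵥ (Ξ *ᵥ C)) < y) :
    ∀ x : Fin n → ℝ, x ≠ μ + c • (Ξ *ᵥ C) → f (μ + c • (Ξ *ᵥ C)) < f x :=
  map_estimate_upper_regime_general Ξ hΞ C μ y c hc f hf hy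
end
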